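/- arXiv:2304.08119 — 5 statements merged into one kernel-verified Lean document; each statement's English description precedes it below -/
import Mathlib

section
/- Let m ≥ 2, let x, y ∈ ℝ² be linearly independent, μ₁, μ₂ nonzero reals, and A = μ₁ x^{⊗m} + μ₂ y^{⊗m}, so (A u^{m-1})_i = μ₁ x_i (xᵀu)^{m-1} + μ₂ y_i (yᵀu)^{m-1}. Then any nonzero solution u of TCP(A, 0) has exactly one nonzero component. -/
/-!
If both entries of `u` were positive, complementarity `uᵢ (A u^{m-1})ᵢ = 0` would force
`A u^{m-1} = μ₁ (xᵀu)^{m-1} x + μ₂ (yᵀu)^{m-1} y` to vanish. Linear independence of `x, y`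
then gives `xᵀu = yᵀu = 0`, and since `x, y` span `ℝ²` this makes `u = 0`.
-/

/-- Action of `A = c₁ x^{⊗m} + c₂ y^{⊗m}` on `u ∈ ℝ²`. -/
def act2 (m : ℕ) (c₁ c₂ : ℝ) (x y u : Fin 2 → ℝ) : Fin 2 → ℝ :=
  fun i => c₁ * x i * (∑ j, x j * u j) ^ (m - 1) +
           c₂ * y i * (∑ j, y j * u j) ^ (m - 1)

theorem eq_zero_of_sum_mul_eq_zero_of_nonneg {ι R : Type*} [Fintype ι] [Ring R] [LinearOrder R]
    [IsStrictOrderedRing R] {u w : ι → R} (hu : ∀ i, 0 ≤ u i) (hw : ∀ i, 0 ≤ w i)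
    (h : ∑ i, u i * w i = 0) {i : ι} (hi : u i ≠ 0) : w i = 0 := by
  have hsummands := (Fintype.sum_eq_zero_iff_of_nonneg fun j => mul_nonneg (hu j) (hw j)).mp h
  exact (mul_eq_zero.mp (congrFun hsummands i)).resolve_left hi

theorem eq_zero_of_forall_dotProduct_eq_zero {ι n K : Type*} [Fintype ι] [Fintype n] [Field K]
    [LinearOrder K] [IsStrictOrderedRing K] {v : ι → n → K} (hv : LinearIndependent K v)
    (hcard : Fintype.card ι = Fintype.card n) {u : n → K} (h : ∀ i, v i ⬝ᵥ u = 0) : u = 0 := by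
  have hspan := hv.span_eq_top_of_card_eq_finrank' (by rwa [Module.finrank_fintype_fun_eq_card])
  obtain ⟨c, hc⟩ :=
    (Submodule.mem_span_range_iff_exists_fun K).mp (hspan ▸ Submodule.mem_top (x := u))
  refine dotProduct_self_eq_zero.mp ?_
  calc u ⬝ᵥ u = (∑ i, c i • v i) ⬝ᵥ u := by rw [hc]
    _ = ∑ i, c i • (v i ⬝ᵥ u) := by simp only [sum_dotProduct, smul_dotProduct]
    _ = 0 := by simp only [h, smul_zero, Finset.sum_const_zero]

theorem act2_eq_smul_add_smul (m : ℕ) (c₁ c₂ : ℝ) (x y u : Fin 2 → ℝ) :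
    act2 m c₁ c₂ x y u = (c₁ * (x ⬝ᵥ u) ^ (m - 1)) • x + (c₂ * (y ⬝ᵥ u) ^ (m - 1)) • y := by
  ext i
  simp only [act2, dotProduct, Pi.add_apply, Pi.smul_apply, smul_eq_mul]
  ring

theorem dotProduct_eq_zero_of_act2_eq_zero {m : ℕ} {c₁ c₂ : ℝ} {x y u : Fin 2 → ℝ}
    (hxy : LinearIndependent ℝ ![x, y]) (hc₁ : c₁ ≠ 0) (hc₂ : c₂ ≠ 0)
    (h : act2 m c₁ c₂ x y u = 0) : x ⬝ᵥ u = 0 ∧ y ⬝ᵥ u = 0 := by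
  rw [act2_eq_smul_add_smul] at h
  obtain ⟨hx, hy⟩ := LinearIndependent.pair_iff.mp hxy _ _ h
  exact ⟨eq_zero_of_pow_eq_zero ((mul_eq_zero.mp hx).resolve_left hc₁),
    eq_zero_of_pow_eq_zero ((mul_eq_zero.mp hy).resolve_left hc₂)⟩

theorem tcp_zero_sol_one_nonzero_general (m : ℕ)
    (x y : Fin 2 → ℝ) (hxy : LinearIndependent ℝ ![x, y])
    (μ₁ μ₂ : ℝ) (h1 : μ₁ ≠ 0) (h2 : μ₂ ≠ 0)
    (u : Fin 2 → ℝ) (hu : u ≠ 0)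
    (h0 : ∀ i, 0 ≤ u i)
    (h1' : ∀ i, 0 ≤ act2 m μ₁ μ₂ x y u i)
    (h2' : (∑ i, u i * act2 m μ₁ μ₂ x y u i) = 0) :
    (u 0 ≠ 0 ∧ u 1 = 0) ∨ (u 0 = 0 ∧ u 1 ≠ 0) := by
  rw [Ne, funext_iff, Fin.forall_fin_two] at hu
  by_contra hsupp
  have hfull : ∀ i, u i ≠ 0 := Fin.forall_fin_two.mpr (by tauto)
  have hA : act2 m μ₁ μ₂ x y u = 0 :=
    funext fun i => eq_zero_of_sum_mul_eq_zero_of_nonneg h0 h1' h2' (hfull i)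
  obtain ⟨hx, hy⟩ := dotProduct_eq_zero_of_act2_eq_zero hxy h1 h2 hA
  have hu0 : u = 0 :=
    eq_zero_of_forall_dotProduct_eq_zero hxy rfl (Fin.forall_fin_two.mpr ⟨hx, hy⟩)
  exact hfull 0 (congrFun hu0 0)

/-- Any nonzero solution of `TCP(μ₁ x^{⊗m} + μ₂ y^{⊗m}, 0)` with `x, y` linearly
independent has exactly one nonzero component. -/
theorem tcp_zero_sol_one_nonzero (m : ℕ) (hm : 2 ≤ m)
    (x y : Fin 2 → ℝ) (hxy : LinearIndependent ℝ ![x, y])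
    (μ₁ μ₂ : ℝ) (h1 : μ₁ ≠ 0) (h2 : μ₂ ≠ 0)
    (u : Fin 2 → ℝ) (hu : u ≠ 0)
    (h0 : ∀ i, 0 ≤ u i)
    (h1' : ∀ i, 0 ≤ act2 m μ₁ μ₂ x y u i)
    (h2' : (∑ i, u i * act2 m μ₁ μ₂ x y u i) = 0) :
    (u 0 ≠ 0 ∧ u 1 = 0) ∨ (u 0 = 0 ∧ u 1 ≠ 0) :=
  tcp_zero_sol_one_nonzero_general m x y hxy μ₁ μ₂ h1 h2 u hu h0 h1' h2'
end

section
/- Let m ≥ 3 be odd and x, y ∈ ℝ² be linearly independent with A = x^{⊗m} + y^{⊗m}, so (A u^{m-1})_i = x_i (xᵀu)^{m-1} + y_i (yᵀu)^{m-1}. If A is not an R₀-tensor, then either (y₁ = −x₁, x₁ ≠ 0, and x₂ + y₂ > 0) or (y₂ = −x₂, x₂ ≠ 0, and x₁ + y₁ > 0). -/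
open Matrix

section Pair

variable {K : Type*} [Field K] {x y : Fin 2 → K}

theorem isUnit_of_linearIndependent_pair (h : LinearIndependent K ![x, y]) :
    IsUnit (Matrix.of ![x, y]) :=
  Matrix.linearIndependent_rows_iff_isUnit.mp h

theorem eq_zero_of_dotProduct_eq_zero_of_linearIndependent (h : LinearIndependent K ![x, y])
    {u : Fin 2 → K} (hx : x ⬝ᵥ u = 0) (hy : y ⬝ᵥ u = 0) : u = 0 := by
  refine Matrix.mulVec_injective_iff_isUnit.mpr (isUnit_of_linearIndependent_pair h) ?_
  ext i
  fin_cases i <;> simp [mulVec, hx, hy]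

theorem cross_ne_zero_of_linearIndependent (h : LinearIndependent K ![x, y])
    {i j : Fin 2} (hij : i ≠ j) : x i * y j - x j * y i ≠ 0 := by
  have hdet := ((Matrix.isUnit_iff_isUnit_det _).mp (isUnit_of_linearIndependent_pair h)).ne_zero
  rw [Matrix.det_fin_two] at hdet
  fin_cases i <;> fin_cases j
  · exact absurd rfl hij
  · simpa using hdet
  · simpa [sub_eq_zero, eq_comm (a := x 1 * y 0)] using hdet
  · exact absurd rfl hij

theorem pair_structure_of_add_eq_zero [LinearOrder K] [IsStrictOrderedRing K]
    (h : LinearIndependent K ![x, y]) {i j : Fin 2} (hij : i ≠ j) (hi : x i + y i = 0)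
    (hj : 0 ≤ x j + y j) : y i = -x i ∧ x i ≠ 0 ∧ 0 < x j + y j := by
  have hyi : y i = -x i := eq_neg_of_add_eq_zero_right hi
  have hcross := cross_ne_zero_of_linearIndependent h hij
  refine ⟨hyi, fun hxi ↦ hcross ?_, hj.lt_of_ne fun hj' ↦ hcross ?_⟩
  · rw [hyi, hxi]
    ring
  · rw [hyi, eq_neg_of_add_eq_zero_right hj'.symm]
    ring

end Pair

theorem mul_eq_zero_of_dotProduct_eq_zero {ι R : Type*} [Fintype ι] [Semiring R] [PartialOrder R]
    [IsOrderedRing R] {u v : ι → R} (hu : 0 ≤ u) (hv : 0 ≤ v) (huv : u ⬝ᵥ v = 0) (i : ι) :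
    u i * v i = 0 :=
  (Finset.sum_eq_zero_iff_of_nonneg fun j _ ↦ mul_nonneg (hu j) (hv j)).mp huv i
    (Finset.mem_univ i)

theorem eq_neg_of_pow_add_pow_eq_zero {R : Type*} [Ring R] [LinearOrder R] [IsStrictOrderedRing R]
    {n : ℕ} (hn : Odd n) {a b : R} (h : a ^ n + b ^ n = 0) : b = -a :=
  hn.strictMono_pow.injective <| by simp only [hn.neg_pow]; exact eq_neg_of_add_eq_zero_right h

theorem act2_apply (m : ℕ) (c₁ c₂ : ℝ) (x y u : Fin 2 → ℝ) (i : Fin 2) :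
    act2 m c₁ c₂ x y u i = c₁ * x i * (x ⬝ᵥ u) ^ (m - 1) + c₂ * y i * (y ⬝ᵥ u) ^ (m - 1) :=
  rfl

theorem dotProduct_act2 {m : ℕ} (hm : 0 < m) (c₁ c₂ : ℝ) (x y u : Fin 2 → ℝ) :
    u ⬝ᵥ act2 m c₁ c₂ x y u = c₁ * (x ⬝ᵥ u) ^ m + c₂ * (y ⬝ᵥ u) ^ m := by
  obtain ⟨k, rfl⟩ : ∃ k, m = k + 1 := ⟨m - 1, by omega⟩
  simp only [dotProduct, act2, Fin.sum_univ_two, Nat.add_sub_cancel]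
  ring

theorem act2_of_dotProduct_eq_neg {m : ℕ} (hm : Odd m) {x y u : Fin 2 → ℝ}
    (h : y ⬝ᵥ u = -(x ⬝ᵥ u)) : act2 m 1 1 x y u = (x ⬝ᵥ u) ^ (m - 1) • (x + y) := by
  ext i
  rw [act2_apply, h, (Nat.Odd.sub_odd hm odd_one).neg_pow]
  simp only [Pi.smul_apply, Pi.add_apply, smul_eq_mul]
  ring

theorem odd_not_R0_structure_general (m : ℕ) (hodd : Odd m)
    (x y : Fin 2 → ℝ) (hxy : LinearIndependent ℝ ![x, y])
    (hnotR0 : ¬ (∀ u : Fin 2 → ℝ,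
      (∀ i, 0 ≤ u i) →
      (∀ i, 0 ≤ act2 m 1 1 x y u i) →
      (∑ i, u i * act2 m 1 1 x y u i) = 0 →
      u = 0)) :
    (y 0 = -(x 0) ∧ x 0 ≠ 0 ∧ 0 < x 1 + y 1) ∨
    (y 1 = -(x 1) ∧ x 1 ≠ 0 ∧ 0 < x 0 + y 0) := by
  push Not at hnotR0
  obtain ⟨u, hu, hAu, hcompl, hu0⟩ := hnotR0
  have hyu : y ⬝ᵥ u = -(x ⬝ᵥ u) := eq_neg_of_pow_add_pow_eq_zero hodd <| by
    simpa using (dotProduct_act2 hodd.pos 1 1 x y u).symm.trans hcompl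
  have hxu : x ⬝ᵥ u ≠ 0 := fun h ↦
    hu0 (eq_zero_of_dotProduct_eq_zero_of_linearIndependent hxy h (by rw [hyu, h, neg_zero]))
  rw [act2_of_dotProduct_eq_neg hodd hyu] at hAu
  have hpow : 0 < (x ⬝ᵥ u) ^ (m - 1) := (Nat.Odd.sub_odd hodd odd_one).pow_pos hxu
  have hsum_nonneg : 0 ≤ x + y := fun i ↦ nonneg_of_mul_nonneg_right (hAu i) hpow
  have hslack := mul_eq_zero_of_dotProduct_eq_zero hu hsum_nonneg <| by
    rw [dotProduct_add, dotProduct_comm u x, dotProduct_comm u y, hyu, add_neg_cancel]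
  obtain ⟨i, hi⟩ := Function.ne_iff.mp hu0
  have hi_zero : x i + y i = 0 := (mul_eq_zero.mp (hslack i)).resolve_left hi
  fin_cases i
  · exact .inl (pair_structure_of_add_eq_zero hxy zero_ne_one hi_zero (hsum_nonneg 1))
  · exact .inr (pair_structure_of_add_eq_zero hxy one_ne_zero hi_zero (hsum_nonneg 0))

/-- For odd `m ≥ 3` and linearly independent `x, y`, if `A = x^{⊗m} + y^{⊗m}` is not
an R₀-tensor, then `(y₁ = -x₁, x₁ ≠ 0, x₂ + y₂ > 0)` or `(y₂ = -x₂, x₂ ≠ 0,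
x₁ + y₁ > 0)`. -/
theorem odd_not_R0_structure (m : ℕ) (hm : 3 ≤ m) (hodd : Odd m)
    (x y : Fin 2 → ℝ) (hxy : LinearIndependent ℝ ![x, y])
    (hnotR0 : ¬ (∀ u : Fin 2 → ℝ,
      (∀ i, 0 ≤ u i) →
      (∀ i, 0 ≤ act2 m 1 1 x y u i) →
      (∑ i, u i * act2 m 1 1 x y u i) = 0 →
      u = 0)) :
    (y 0 = -(x 0) ∧ x 0 ≠ 0 ∧ 0 < x 1 + y 1) ∨
    (y 1 = -(x 1) ∧ x 1 ≠ 0 ∧ 0 < x 0 + y 0) :=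
  odd_not_R0_structure_general m hodd x y hxy hnotR0
end

section
/- Let m ≥ 3 be odd and x, y ∈ ℝ² be linearly independent with A = x^{⊗m} + y^{⊗m}. Suppose y₁ = −x₁, x₁ ≠ 0, and x₂ + y₂ > 0. Then A is not a Q-tensor: in fact, for q = (−|x₁|, |x₂| + |y₂|) the problem TCP(A, q) has no solution. -/
/-- `u` solves `TCP(A, q)` in dimension 2. -/
def tcpSol2 (F : (Fin 2 → ℝ) → (Fin 2 → ℝ)) (q u : Fin 2 → ℝ) : Prop :=
  (∀ i, 0 ≤ u i) ∧ (∀ i, 0 ≤ F u i + q i) ∧ (∑ i, u i * (F u i + q i)) = 0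

theorem tcpSol2.eq_zero_of_pos {F : (Fin 2 → ℝ) → (Fin 2 → ℝ)} {q u : Fin 2 → ℝ}
    (h : tcpSol2 F q u) {i : Fin 2} (hi : 0 < u i) : F u i + q i = 0 := by
  obtain ⟨hu, hw, hsum⟩ := h
  have hterm : u i * (F u i + q i) = 0 :=
    (Finset.sum_eq_zero_iff_of_nonneg fun j _ => mul_nonneg (hu j) (hw j)).mp hsum i
      (Finset.mem_univ i)
  exact (mul_eq_zero.mp hterm).resolve_left hi.ne'

section LinearOrderedField

variable {R : Type*} [Field R] [LinearOrder R] [IsStrictOrderedRing R]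

theorem Odd.pow_add_pow_pos {m : ℕ} (hm : Odd m) {a b : R} (hab : 0 < a + b) :
    0 < a ^ m + b ^ m := by
  have h : (-b) ^ m < a ^ m := hm.strictMono_pow (by linarith)
  rw [hm.neg_pow] at h
  linarith

theorem mul_add_mul_add_abs_add_abs_pos {a b c d e : R} (ha : 0 ≤ a) (hb : 0 ≤ b) (hc : c ≠ 0)
    (habc : c * (a - b) = |c|) (hde : 0 < d + e) : 0 < d * a + e * b + |d| + |e| := by
  rcases hc.lt_or_gt with hneg | hpos
  · obtain rfl : b = a + 1 := by
      rw [abs_of_neg hneg] at habc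
      nlinarith
    linarith [mul_nonneg hde.le ha, le_abs_self d, le_abs_self e, neg_abs_le d, neg_abs_le e]
  · obtain rfl : a = b + 1 := by
      rw [abs_of_pos hpos] at habc
      nlinarith
    linarith [mul_nonneg hde.le hb, le_abs_self d, le_abs_self e, neg_abs_le d, neg_abs_le e]

end LinearOrderedField

section act2

variable {m : ℕ} {x y u : Fin 2 → ℝ}

theorem act2_one_one_apply (i : Fin 2) :
    act2 m 1 1 x y u i = x i * (x 0 * u 0 + x 1 * u 1) ^ (m - 1) +
      y i * (y 0 * u 0 + y 1 * u 1) ^ (m - 1) := by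
  simp [act2, Fin.sum_univ_two]

theorem act2_one_one_zero_of_snd_eq_zero (hm : Odd m) (hyx : y 0 = -x 0) (hu : u 1 = 0) :
    act2 m 1 1 x y u 0 = 0 := by
  have he : Even (m - 1) := Nat.Odd.sub_odd hm odd_one
  rw [act2_one_one_apply, hyx, hu]
  simp only [mul_zero, add_zero, neg_mul, he.neg_pow]
  ring

theorem act2_one_one_one_of_fst_eq_zero (hm : Odd m) (hu : u 0 = 0) :
    act2 m 1 1 x y u 1 = (x 1 ^ m + y 1 ^ m) * u 1 ^ (m - 1) := by
  obtain ⟨k, rfl⟩ := hm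
  rw [act2_one_one_apply, hu]
  simp only [mul_zero, zero_add, mul_pow, add_tsub_cancel_right]
  ring

theorem act2_one_one_nonneg_of_fst_eq_zero (hm : Odd m) (hu : u 0 = 0) (hxy : 0 < x 1 + y 1) :
    0 ≤ act2 m 1 1 x y u 1 := by
  rw [act2_one_one_one_of_fst_eq_zero hm hu]
  exact mul_nonneg (hm.pow_add_pow_pos hxy).le ((Nat.Odd.sub_odd hm odd_one).pow_nonneg _)

end act2

theorem not_tcpSol2_act2_one_one {m : ℕ} (hm : Odd m) {x y : Fin 2 → ℝ} (hyx : y 0 = -x 0)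
    (hx : x 0 ≠ 0) (hxy : 0 < x 1 + y 1) (u : Fin 2 → ℝ) :
    ¬ tcpSol2 (act2 m 1 1 x y) ![-(|x 0|), |x 1| + |y 1|] u := by
  intro hsol
  have habs : 0 < |x 1| + |y 1| := by linarith [le_abs_self (x 1), le_abs_self (y 1)]
  have hu1 : 0 < u 1 := by
    refine (hsol.1 1).lt_of_ne' fun hu1 => ?_
    have hw0 := hsol.2.1 0
    simp only [Matrix.cons_val_zero, act2_one_one_zero_of_snd_eq_zero hm hyx hu1] at hw0
    linarith [abs_pos.mpr hx]
  have hw1 := hsol.eq_zero_of_pos hu1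
  simp only [Matrix.cons_val_one, Matrix.cons_val_fin_one] at hw1
  rcases (hsol.1 0).eq_or_lt with hu0 | hu0
  · linarith [act2_one_one_nonneg_of_fst_eq_zero hm hu0.symm hxy]
  · have hw0 := hsol.eq_zero_of_pos hu0
    have he : Even (m - 1) := Nat.Odd.sub_odd hm odd_one
    simp only [act2_one_one_apply, Matrix.cons_val_zero, hyx] at hw0 hw1
    have hw1_pos := mul_add_mul_add_abs_add_abs_pos (he.pow_nonneg (x 0 * u 0 + x 1 * u 1))
      (he.pow_nonneg (-x 0 * u 0 + y 1 * u 1)) hx (by linarith) hxy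
    linarith

theorem odd_case_not_Q_general (m : ℕ) (hodd : Odd m)
    (x y : Fin 2 → ℝ)
    (h1 : y 0 = -(x 0)) (h2 : x 0 ≠ 0) (h3 : 0 < x 1 + y 1) :
    (¬ ∃ u, tcpSol2 (act2 m 1 1 x y) ![-(|x 0|), |x 1| + |y 1|] u) ∧
    ¬ (∀ q : Fin 2 → ℝ, ∃ u, tcpSol2 (act2 m 1 1 x y) q u) := by
  have hnone : ¬ ∃ u, tcpSol2 (act2 m 1 1 x y) ![-(|x 0|), |x 1| + |y 1|] u :=
    fun ⟨u, hu⟩ => not_tcpSol2_act2_one_one hodd h1 h2 h3 u hu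
  exact ⟨hnone, fun h => hnone (h _)⟩

/-- For odd `m ≥ 3`, linearly independent `x, y` with `y₁ = -x₁`, `x₁ ≠ 0`,
`x₂ + y₂ > 0`, the tensor `A = x^{⊗m} + y^{⊗m}` is not a Q-tensor: for
`q = (-|x₁|, |x₂| + |y₂|)`, `TCP(A, q)` has no solution. -/
theorem odd_case_not_Q (m : ℕ) (hm : 3 ≤ m) (hodd : Odd m)
    (x y : Fin 2 → ℝ) (hxy : LinearIndependent ℝ ![x, y])
    (h1 : y 0 = -(x 0)) (h2 : x 0 ≠ 0) (h3 : 0 < x 1 + y 1) :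
    (¬ ∃ u, tcpSol2 (act2 m 1 1 x y) ![-(|x 0|), |x 1| + |y 1|] u) ∧
    ¬ (∀ q : Fin 2 → ℝ, ∃ u, tcpSol2 (act2 m 1 1 x y) q u) :=
  odd_case_not_Q_general m hodd x y h1 h2 h3
end

section
/- Let m ≥ 2 be even and x, y ∈ ℝ² with y₁ = α x₁ for some α ∈ {1, −1}, x₁(x₂ − α y₂) > 0, and |x₂| ≥ |y₂|. Then the tensor A = x^{⊗m} − y^{⊗m} is nonnegative (all entries ≥ 0) and its entry a_{11…1} = x₁^m − y₁^m equals 0; consequently A is not a Q-tensor. -/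
/-!
Every entry of `A` is `x₁^p x₂^q - y₁^p y₂^q` with `p + q = m` even, and since `α^p = α^q` it
factors as `x₁^p (x₂^q - (α y₂)^q)`: for `p, q` even this is nonnegative because `|α y₂| ≤ |x₂|`,
for `p, q` odd because `x₁` and `x₂ - α y₂` have the same sign. The entry `a₁…₁` vanishes as
`y₁^m = α^m x₁^m = x₁^m`. For `q = (-1, 1)`, nonnegativity of `A` makes `(A u^{m-1})₂ + 1 > 0`,
so complementarity forces `u₂ = 0`; then `(A u^{m-1})₁ = a₁…₁ u₁^{m-1} = 0`, leaving
`(A u^{m-1})₁ + q₁ = -1 < 0`.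
-/

open Finset

lemma pow_eq_pow_of_even_add {R : Type*} [Ring R] {α : R} (hα : α = 1 ∨ α = -1) {p q : ℕ}
    (hpq : Even (p + q)) : α ^ p = α ^ q := by
  rcases hα with rfl | rfl
  · simp
  · exact neg_one_pow_congr (Nat.even_add.mp hpq)

lemma pow_mul_sub_pow_nonneg_of_even_add {a b c : ℝ} (hcb : |c| ≤ |b|) (habc : 0 ≤ a * (b - c))
    {p q : ℕ} (hpq : Even (p + q)) : 0 ≤ a ^ p * (b ^ q - c ^ q) := by
  rcases Nat.even_or_odd p with hp | hp
  · have hq : Even q := (Nat.even_add.mp hpq).mp hp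
    refine mul_nonneg (hp.pow_nonneg a) (sub_nonneg.2 ?_)
    rw [← hq.pow_abs b, ← hq.pow_abs c]
    exact pow_le_pow_left₀ (abs_nonneg c) hcb q
  · have hq : Odd q := by
      rw [Nat.even_add, ← Nat.not_odd_iff_even, ← Nat.not_odd_iff_even] at hpq
      tauto
    rcases mul_nonneg_iff.mp habc with ⟨ha, hbc⟩ | ⟨ha, hbc⟩
    · exact mul_nonneg (hp.pow_nonneg_iff.2 ha) (sub_nonneg.2 (hq.pow_le_pow.2 (by linarith)))
    · exact mul_nonneg_of_nonpos_of_nonpos (hp.pow_nonpos_iff.2 ha)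
        (sub_nonpos.2 (hq.pow_le_pow.2 (by linarith)))

lemma exists_prod_comp_eq_pow_mul_pow {m : ℕ} (idx : Fin m → Fin 2) :
    ∃ p q : ℕ, p + q = m ∧ ∀ z : Fin 2 → ℝ, ∏ k, z (idx k) = z 0 ^ p * z 1 ^ q := by
  refine ⟨#{k | idx k = 0}, #{k | idx k = 1}, ?_, fun z => ?_⟩
  · simpa [Fin.sum_univ_two] using
      (card_eq_sum_card_fiberwise (f := idx) (s := univ) (t := univ) (by simp)).symm
  · simp only [← prod_fiberwise' univ idx z, prod_const, Fin.prod_univ_two]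

/-- Expanding `(∑ j, x j * u j) ^ n` as a sum over multi-indices writes the left-hand side as a
combination of entries of `x^{⊗(n+1)} - y^{⊗(n+1)}` with coefficients `∏ k, u (idx k) ≥ 0`. -/
lemma sub_mul_sum_pow_nonneg {ι : Type*} [Fintype ι] {n : ℕ} {x y u : ι → ℝ}
    (hA : ∀ idx : Fin (n + 1) → ι, 0 ≤ (∏ k, x (idx k)) - ∏ k, y (idx k)) (hu : ∀ j, 0 ≤ u j)
    (i : ι) : 0 ≤ x i * (∑ j, x j * u j) ^ n - y i * (∑ j, y j * u j) ^ n := by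
  simp only [Fintype.sum_pow, mul_sum, ← sum_sub_distrib]
  refine sum_nonneg fun idx _ => ?_
  have hentry := hA (Fin.cons i idx)
  simp only [Fin.prod_univ_succ, Fin.cons_zero, Fin.cons_succ] at hentry
  calc 0 ≤ (x i * ∏ k, x (idx k) - y i * ∏ k, y (idx k)) * ∏ k, u (idx k) :=
        mul_nonneg hentry (prod_nonneg fun k _ => hu (idx k))
    _ = _ := by simp only [prod_mul_distrib]; ring

lemma act2_apply_zero_of_apply_one_eq_zero (n : ℕ) (c₁ c₂ : ℝ) (x y : Fin 2 → ℝ)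
    {u : Fin 2 → ℝ} (hu : u 1 = 0) :
    act2 (n + 1) c₁ c₂ x y u 0 = (c₁ * x 0 ^ (n + 1) + c₂ * y 0 ^ (n + 1)) * u 0 ^ n := by
  simp only [act2, Fin.sum_univ_two, hu, mul_zero, add_zero, Nat.add_sub_cancel, mul_pow]
  ring

lemma not_tcpSol2_of_nonneg_of_apply_zero_eq_zero {F : (Fin 2 → ℝ) → Fin 2 → ℝ}
    (hF₁ : ∀ u, (∀ i, 0 ≤ u i) → 0 ≤ F u 1) (hF₀ : ∀ u, u 1 = 0 → F u 0 = 0)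
    (u : Fin 2 → ℝ) : ¬ tcpSol2 F ![-1, 1] u := by
  rintro ⟨hu, hw, hcompl⟩
  simp only [Fin.sum_univ_two, Matrix.cons_val_zero, Matrix.cons_val_one] at hcompl
  have hw₀ := hw 0
  have hw₁ := hw 1
  simp only [Matrix.cons_val_zero, Matrix.cons_val_one] at hw₀ hw₁
  have hu₁ : u 1 = 0 := by
    have hterm : u 1 * (F u 1 + 1) = 0 := by
      linarith [mul_nonneg (hu 0) hw₀, mul_nonneg (hu 1) hw₁]
    exact (mul_eq_zero.1 hterm).resolve_right (by linarith [hF₁ u hu])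
  rw [hF₀ u hu₁] at hw₀
  linarith

/-- For even `m`, `y₁ = α x₁` with `α = ±1`, `x₁ (x₂ - α y₂) > 0` and `|x₂| ≥ |y₂|`:
the tensor `A = x^{⊗m} - y^{⊗m}` is nonnegative, its `(1,…,1)` entry vanishes, and
`A` is not a Q-tensor. -/
theorem even_nonneg_case_not_Q (m : ℕ) (hm : 2 ≤ m) (heven : Even m)
    (x y : Fin 2 → ℝ) (α : ℝ) (hα : α = 1 ∨ α = -1)
    (h1 : y 0 = α * x 0) (h2 : 0 < x 0 * (x 1 - α * y 1)) (h3 : |y 1| ≤ |x 1|) :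
    (∀ idx : Fin m → Fin 2, 0 ≤ (∏ k, x (idx k)) - ∏ k, y (idx k)) ∧
    (x 0 ^ m - y 0 ^ m = 0) ∧
    ¬ (∀ q : Fin 2 → ℝ, ∃ u, tcpSol2 (act2 m 1 (-1) x y) q u) := by
  have habs : |α * y 1| ≤ |x 1| := by
    rcases hα with rfl | rfl <;> simpa using h3
  have hentry : ∀ idx : Fin m → Fin 2, 0 ≤ (∏ k, x (idx k)) - ∏ k, y (idx k) := by
    intro idx
    obtain ⟨p, q, rfl, hprod⟩ := exists_prod_comp_eq_pow_mul_pow idx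
    have hy : y 0 ^ p * y 1 ^ q = x 0 ^ p * (α * y 1) ^ q := by
      rw [h1, mul_pow, mul_pow, pow_eq_pow_of_even_add hα heven]
      ring
    rw [hprod, hprod, hy, ← mul_sub]
    exact pow_mul_sub_pow_nonneg_of_even_add habs h2.le heven
  have hdiag : x 0 ^ m - y 0 ^ m = 0 := by
    rw [h1, mul_pow, pow_eq_pow_of_even_add hα (q := 0) (by simpa), pow_zero, one_mul, sub_self]
  refine ⟨hentry, hdiag, fun hQ => ?_⟩
  obtain ⟨n, rfl⟩ : ∃ n, m = n + 1 := ⟨m - 1, by omega⟩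
  obtain ⟨u, hu⟩ := hQ ![-1, 1]
  refine not_tcpSol2_of_nonneg_of_apply_zero_eq_zero (fun v hv => ?_) (fun v hv => ?_) u hu
  · simpa [act2, sub_eq_add_neg] using sub_mul_sum_pow_nonneg hentry hv 1
  · rw [act2_apply_zero_of_apply_one_eq_zero n 1 (-1) x y hv]
    linear_combination v 0 ^ n * hdiag
end

section
/- Let m ≥ 2 be even and x, y ∈ ℝ² linearly independent, and A = −x^{⊗m} − y^{⊗m}, so (A u^{m-1})_i = −x_i(xᵀu)^{m-1} − y_i(yᵀu)^{m-1}. Then A is not a Q-tensor: for any q ∈ ℝ² with q₁ < 0 and q₂ < 0, TCP(A, q) has no solution. -/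
/-! If `uᵀ F(u) ≤ 0` everywhere, the complementarity condition `uᵀ(F u + q) = 0` with `u ≥ 0` and
`q < 0` forces `u = 0`; then `F 0 + q = q ≥ 0` is impossible once `F 0 = 0`. For
`F u = -(xᵀu)^{m-1} x - (yᵀu)^{m-1} y` one has `uᵀ F(u) = -(xᵀu)^m - (yᵀu)^m ≤ 0` for even `m`. -/

theorem tcpSol2_eq_zero {F : (Fin 2 → ℝ) → (Fin 2 → ℝ)} {q u : Fin 2 → ℝ}
    (hF : ∑ i, u i * F u i ≤ 0) (hq : ∀ i, q i < 0) (hu : tcpSol2 F q u) : u = 0 := by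
  obtain ⟨hu_nonneg, -, hcompl⟩ := hu
  have hterm : ∀ i, u i * q i ≤ 0 := fun i =>
    mul_nonpos_of_nonneg_of_nonpos (hu_nonneg i) (hq i).le
  have hsum : ∑ i, u i * q i = 0 := by
    refine le_antisymm (Finset.sum_nonpos fun i _ => hterm i) ?_
    simp only [mul_add, Finset.sum_add_distrib] at hcompl
    linarith
  have hzero := (Finset.sum_eq_zero_iff_of_nonpos fun i _ => hterm i).1 hsum
  funext i
  simpa [(hq i).ne] using hzero i (Finset.mem_univ i)

theorem not_exists_tcpSol2_of_neg {F : (Fin 2 → ℝ) → (Fin 2 → ℝ)} {q : Fin 2 → ℝ}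
    (hF0 : F 0 = 0) (hF : ∀ u, ∑ i, u i * F u i ≤ 0) (hq : ∀ i, q i < 0) :
    ¬ ∃ u, tcpSol2 F q u := by
  rintro ⟨u, hu⟩
  have hfeas := hu.2.1 0
  rw [tcpSol2_eq_zero (hF u) hq hu, hF0] at hfeas
  exact (hq 0).not_ge (by simpa using hfeas)

theorem act2_zero {m : ℕ} (hm : 2 ≤ m) (c₁ c₂ : ℝ) (x y : Fin 2 → ℝ) :
    act2 m c₁ c₂ x y 0 = 0 := by
  funext i
  simp [act2, zero_pow (show m - 1 ≠ 0 by omega)]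

theorem sum_mul_act2 {m : ℕ} (hm : 1 ≤ m) (c₁ c₂ : ℝ) (x y u : Fin 2 → ℝ) :
    ∑ i, u i * act2 m c₁ c₂ x y u i =
      c₁ * (∑ j, x j * u j) ^ m + c₂ * (∑ j, y j * u j) ^ m := by
  obtain ⟨k, rfl⟩ := Nat.exists_eq_add_of_le' hm
  simp only [act2, Fin.sum_univ_two, Nat.add_sub_cancel]
  ring

theorem sum_mul_act2_neg_nonpos {m : ℕ} (hm : 1 ≤ m) (heven : Even m) (x y u : Fin 2 → ℝ) :
    ∑ i, u i * act2 m (-1) (-1) x y u i ≤ 0 := by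
  rw [sum_mul_act2 hm]
  nlinarith [heven.pow_nonneg (∑ j, x j * u j), heven.pow_nonneg (∑ j, y j * u j)]

theorem even_neg_not_Q_general (m : ℕ) (hm : 2 ≤ m) (heven : Even m)
    (x y : Fin 2 → ℝ) :
    (∀ q : Fin 2 → ℝ, q 0 < 0 → q 1 < 0 →
      ¬ ∃ u, tcpSol2 (act2 m (-1) (-1) x y) q u) ∧
    ¬ (∀ q : Fin 2 → ℝ, ∃ u, tcpSol2 (act2 m (-1) (-1) x y) q u) := by
  have hneg : ∀ q : Fin 2 → ℝ, q 0 < 0 → q 1 < 0 →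
      ¬ ∃ u, tcpSol2 (act2 m (-1) (-1) x y) q u := fun q hq0 hq1 =>
    not_exists_tcpSol2_of_neg (act2_zero hm _ _ x y)
      (sum_mul_act2_neg_nonpos (by omega) heven x y) (Fin.forall_fin_two.2 ⟨hq0, hq1⟩)
  exact ⟨hneg, fun hQ => hneg (fun _ => -1) (by norm_num) (by norm_num) (hQ _)⟩

/-- For even `m` and linearly independent `x, y`, the tensor
`A = -x^{⊗m} - y^{⊗m}` is not a Q-tensor: for any `q` with both components
negative, `TCP(A, q)` has no solution. -/
theorem even_neg_not_Q (m : ℕ) (hm : 2 ≤ m) (heven : Even m)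
    (x y : Fin 2 → ℝ) (hxy : LinearIndependent ℝ ![x, y]) :
    (∀ q : Fin 2 → ℝ, q 0 < 0 → q 1 < 0 →
      ¬ ∃ u, tcpSol2 (act2 m (-1) (-1) x y) q u) ∧
    ¬ (∀ q : Fin 2 → ℝ, ∃ u, tcpSol2 (act2 m (-1) (-1) x y) q u) :=
  even_neg_not_Q_general m hm heven x y
end
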